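/- arXiv:0801.2322 — 5 statements merged into one kernel-verified Lean document; each statement's English description precedes it below -/
import Mathlib

section
/- Let X be a graph and Γ a group acting on X by graph automorphisms such that the quotient X/Γ is simply laced. Fix orbits U and W and any vertex u₀ ∈ U. Then for every path V₀, V₁, ..., V_r in the quotient graph X/Γ with V₀ = U, there is a unique path v₀, v₁, ..., v_r in X with v₀ = u₀ and v_j ∈ V_j for all 0 ≤ j ≤ r. -/
attribute [local instance] Classical.propDecidable

/-- The quotient of a graph `X` by the action of a group `Γ`: vertices are the
orbits, with distinct orbits adjacent iff they contain adjacent representatives. -/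
def quotGraph {V : Type*} (X : SimpleGraph V) (Γ : Type*) [Group Γ] [MulAction Γ V] :
    SimpleGraph (Quotient (MulAction.orbitRel Γ V)) where
  Adj U W := U ≠ W ∧ ∃ u w : V, Quotient.mk (MulAction.orbitRel Γ V) u = U ∧
      Quotient.mk (MulAction.orbitRel Γ V) w = W ∧ X.Adj u w
  symm := by
    constructor
    rintro U W ⟨hne, u, w, hu, hw, h⟩
    exact ⟨hne.symm, w, u, hw, hu, h.symm⟩
  loopless := by
    constructor
    rintro U ⟨hne, -⟩
    exact hne rfl

/-- The quotient `X/Γ` is simply laced: no edge of `X` joins two vertices of a single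
orbit, and no vertex of `X` has two distinct neighbors in the same orbit. -/
def SimplyLaced {V : Type*} (X : SimpleGraph V) (Γ : Type*) [Group Γ] [MulAction Γ V] : Prop :=
  (∀ u v : V, X.Adj u v →
      Quotient.mk (MulAction.orbitRel Γ V) u ≠ Quotient.mk (MulAction.orbitRel Γ V) v) ∧
  (∀ u v w : V, X.Adj u v → X.Adj u w →
      Quotient.mk (MulAction.orbitRel Γ V) v = Quotient.mk (MulAction.orbitRel Γ V) w → v = w)


/-! Lifting through the orbit map is a covering-space argument: automorphisms move an edge of the
quotient at `[u]` to an edge of `X` at `u`, simple lacing makes that lift unique, and unique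
lifting of single edges propagates along a path by induction on its length. -/

theorem existsUnique_chain_lift {V Q : Type*} (p : V → Q) (R : V → V → Prop)
    (S : Q → Q → Prop) (hstep : ∀ u W, S (p u) W → ∃! w, R u w ∧ p w = W) (r : ℕ)
    (Vp : Fin (r + 1) → Q) (u₀ : V) (h0 : Vp 0 = p u₀)
    (hpath : ∀ j : Fin r, S (Vp j.castSucc) (Vp j.succ)) :
    ∃! v : Fin (r + 1) → V, v 0 = u₀ ∧ (∀ j, p (v j) = Vp j) ∧
      ∀ j : Fin r, R (v j.castSucc) (v j.succ) := by
  induction r generalizing u₀ with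
  | zero =>
    refine ⟨fun _ => u₀, ⟨rfl, fun j => ?_, Fin.elim0⟩, fun v hv => funext fun j => ?_⟩
    · rw [Fin.fin_one_eq_zero j, h0]
    · rw [Fin.fin_one_eq_zero j, hv.1]
  | succ r ih =>
    obtain ⟨u₁, ⟨hR₁, hp₁⟩, hu₁⟩ := hstep u₀ (Vp 1) (h0 ▸ hpath 0)
    obtain ⟨v, ⟨hv0, hvp, hvR⟩, hv⟩ :=
      ih (fun j => Vp j.succ) u₁ hp₁.symm (fun j => hpath j.succ)
    refine ⟨Fin.cons u₀ v, ⟨rfl, Fin.cases h0.symm hvp, Fin.cases (hv0 ▸ hR₁ :) hvR⟩, ?_⟩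
    rintro w ⟨hw0, hwp, hwR⟩
    have hw1 : w 1 = u₁ := hu₁ _ ⟨hw0 ▸ hwR 0, hwp 1⟩
    have htail : Fin.tail w = v := hv _ ⟨hw1, fun j => hwp j.succ, fun j => hwR j.succ⟩
    rw [← Fin.cons_self_tail w, hw0, htail]

section Quotient

variable {V : Type*} {X : SimpleGraph V} {Γ : Type*} [Group Γ] [MulAction Γ V]

theorem quotGraph_adj_lift (hAut : ∀ (g : Γ) (u v : V), X.Adj u v → X.Adj (g • u) (g • v))
    {u : V} {W : Quotient (MulAction.orbitRel Γ V)}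
    (h : (quotGraph X Γ).Adj (Quotient.mk _ u) W) :
    ∃ w, X.Adj u w ∧ Quotient.mk (MulAction.orbitRel Γ V) w = W := by
  obtain ⟨-, u', w', hu', rfl, hadj⟩ := h
  obtain ⟨g, rfl⟩ : u' ∈ MulAction.orbit Γ u := Quotient.exact hu'
  refine ⟨g⁻¹ • w', ?_, Quotient.sound ⟨g⁻¹, rfl⟩⟩
  simpa using hAut g⁻¹ _ _ hadj

theorem SimplyLaced.existsUnique_adj_lift (hSL : SimplyLaced X Γ)
    (hAut : ∀ (g : Γ) (u v : V), X.Adj u v → X.Adj (g • u) (g • v))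
    {u : V} {W : Quotient (MulAction.orbitRel Γ V)}
    (h : (quotGraph X Γ).Adj (Quotient.mk _ u) W) :
    ∃! w, X.Adj u w ∧ Quotient.mk (MulAction.orbitRel Γ V) w = W := by
  obtain ⟨w, hw⟩ := quotGraph_adj_lift hAut h
  exact ⟨w, hw, fun w' hw' => hSL.2 u w' w hw'.1 hw.1 (hw'.2.trans hw.2.symm)⟩

end Quotient

/-- Unique path lifting for simply laced quotients: every path in `X/Γ`
starting at the orbit of `u₀` lifts to a unique path in `X` starting at `u₀`. -/
theorem quotGraph_unique_path_lift
    {V : Type*} (X : SimpleGraph V) (Γ : Type*) [Group Γ] [MulAction Γ V]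
    (hAut : ∀ (g : Γ) (u v : V), X.Adj u v ↔ X.Adj (g • u) (g • v))
    (hSL : SimplyLaced X Γ) (r : ℕ)
    (Vp : Fin (r + 1) → Quotient (MulAction.orbitRel Γ V)) (u₀ : V)
    (h0 : Vp 0 = Quotient.mk (MulAction.orbitRel Γ V) u₀)
    (hpath : ∀ j : Fin r, (quotGraph X Γ).Adj (Vp j.castSucc) (Vp j.succ)) :
    ∃! v : Fin (r + 1) → V, v 0 = u₀ ∧
      (∀ j, Quotient.mk (MulAction.orbitRel Γ V) (v j) = Vp j) ∧
      ∀ j : Fin r, X.Adj (v j.castSucc) (v j.succ) := by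
  exact existsUnique_chain_lift _ X.Adj (quotGraph X Γ).Adj
    (fun _ _ h => hSL.existsUnique_adj_lift (fun g u v => (hAut g u v).1) h) r Vp u₀ h0 hpath
end

section
/- For a graph G with at least k vertices, the quotient of the restricted k-th power G^(k) by the natural action of the symmetric group S_k is a simply laced quotient, and this quotient graph is isomorphic to the k-th symmetric power G^{k}. -/
attribute [local instance] Classical.propDecidable


/-- The restricted k-th power of a graph: vertices are k-tuples of pairwise distinct
vertices; two tuples are adjacent iff they agree in all but one coordinate, at which
the entries are adjacent in `G`. -/
def restPow {V : Type*} (G : SimpleGraph V) (k : ℕ) :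
    SimpleGraph {x : Fin k → V // Function.Injective x} where
  Adj x y := ∃ u, G.Adj (x.1 u) (y.1 u) ∧ ∀ l, l ≠ u → x.1 l = y.1 l
  symm := by
    constructor
    rintro x y ⟨u, h, he⟩
    exact ⟨u, h.symm, fun l hl => (he l hl).symm⟩
  loopless := by
    constructor
    rintro x ⟨u, h, -⟩
    exact G.irrefl h

/-- The natural action of the symmetric group `S_k` on tuples of pairwise distinct
vertices, by permuting the coordinates. -/
instance permMulAction {V : Type*} {k : ℕ} :
    MulAction (Equiv.Perm (Fin k)) {x : Fin k → V // Function.Injective x} where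
  smul σ x := ⟨x.1 ∘ (σ⁻¹ : Equiv.Perm (Fin k)), x.2.comp (Equiv.injective _)⟩
  one_smul x := Subtype.ext (funext fun i => congrArg x.1 (by simp))
  mul_smul σ τ x := Subtype.ext (funext fun i =>
    congrArg x.1 (by simp [mul_inv_rev, Equiv.Perm.mul_apply]))

/-- The k-th symmetric power of a graph: vertices are the k-element subsets of the
vertex set; two k-subsets are adjacent iff their symmetric difference is an edge. -/
def symPow {V : Type*} [DecidableEq V] (G : SimpleGraph V) (k : ℕ) :
    SimpleGraph {s : Finset V // s.card = k} where
  Adj s t := ∃ a b : V, G.Adj a b ∧ symmDiff s.1 t.1 = {a, b}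
  symm := by
    constructor
    rintro s t ⟨a, b, hab, h⟩
    exact ⟨a, b, hab, by rw [symmDiff_comm]; exact h⟩
  loopless := by
    constructor
    rintro s ⟨a, b, hab, h⟩
    rw [symmDiff_self] at h
    have : a ∈ (⊥ : Finset V) := h ▸ Finset.mem_insert_self a {b}
    simp at this

/-!
An `S_k`-orbit of injective `k`-tuples is determined by the set of entries of any of its
members, so the orbits are exactly the `k`-subsets. Changing one coordinate of a tuple to an
adjacent vertex removes one vertex from that set and adds an adjacent one, which is an edge of
the symmetric power; conversely such an edge lifts to the tuple obtained by overwriting the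
coordinate holding the removed vertex. Simple lacing holds because the changed coordinate of
a neighbor can be read off from its set of entries.
-/

theorem Finset.notMem_and_eq_insert_erase_of_symmDiff_eq_pair {α : Type*} [DecidableEq α]
    {s t : Finset α} {a b : α} (hcard : t.card = s.card) (h : symmDiff s t = {a, b})
    (ha : a ∈ s) : b ∉ s ∧ t = insert b (s.erase a) := by
  have hb : b ∉ s := by
    intro hb
    have hts : t ⊆ s := fun v hv => by
      by_contra hvs
      have : v ∈ symmDiff s t := Finset.mem_symmDiff.mpr (Or.inr ⟨hv, hvs⟩)
      rw [h, Finset.mem_insert, Finset.mem_singleton] at this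
      rcases this with rfl | rfl <;> contradiction
    rw [Finset.eq_of_subset_of_card_le hts hcard.ge, symmDiff_self] at h
    exact Finset.insert_ne_empty a {b} h.symm
  refine ⟨hb, ?_⟩
  rw [← symmDiff_symmDiff_cancel_left s t, h]
  ext v
  simp only [Finset.mem_symmDiff, Finset.mem_insert, Finset.mem_singleton, Finset.mem_erase]
  grind

abbrev InjTuple (V : Type*) (k : ℕ) := {x : Fin k → V // Function.Injective x}

namespace InjTuple

variable {V : Type*} [DecidableEq V] {k : ℕ}

def image (x : InjTuple V k) : Finset V := Finset.univ.image x.1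

theorem mem_image {x : InjTuple V k} {v : V} : v ∈ x.image ↔ ∃ i, x.1 i = v := by
  simp [image]

theorem coe_image (x : InjTuple V k) : (x.image : Set V) = Set.range x.1 :=
  Fintype.coe_image_univ

theorem card_image (x : InjTuple V k) : x.image.card = k := by
  rw [image, Finset.card_image_of_injective _ x.2, Finset.card_univ, Fintype.card_fin]

theorem image_smul (σ : Equiv.Perm (Fin k)) (x : InjTuple V k) : (σ • x).image = x.image := by
  rw [← Finset.coe_inj, coe_image, coe_image]
  exact (Equiv.surjective _).range_comp x.1

theorem mk_eq_mk_iff_image_eq {x y : InjTuple V k} :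
    Quotient.mk (MulAction.orbitRel (Equiv.Perm (Fin k)) (InjTuple V k)) x =
      Quotient.mk _ y ↔ x.image = y.image := by
  rw [Quotient.eq, MulAction.orbitRel_apply, MulAction.mem_orbit_iff]
  constructor
  · rintro ⟨σ, rfl⟩
    exact image_smul σ y
  · intro h
    rw [← Finset.coe_inj, coe_image, coe_image] at h
    let σ := (Equiv.ofInjective x.1 x.2).trans
      ((Equiv.setCongr h).trans (Equiv.ofInjective y.1 y.2).symm)
    refine ⟨σ⁻¹, Subtype.ext (funext fun i => ?_)⟩
    show y.1 (σ⁻¹⁻¹ i) = x.1 i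
    rw [inv_inv]
    exact Equiv.apply_ofInjective_symm y.2 _

section EqOff

variable {x y : InjTuple V k} {u : Fin k}

theorem apply_notMem_image (hne : x.1 u ≠ y.1 u) (he : ∀ l, l ≠ u → x.1 l = y.1 l) :
    x.1 u ∉ y.image := by
  intro hmem
  obtain ⟨j, hj⟩ := mem_image.mp hmem
  rcases eq_or_ne j u with rfl | hju
  · exact hne hj.symm
  · exact hju (x.2 ((he j hju).trans hj))

theorem image_sdiff_image (hne : x.1 u ≠ y.1 u) (he : ∀ l, l ≠ u → x.1 l = y.1 l) :
    x.image \ y.image = {x.1 u} := by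
  ext v
  simp only [Finset.mem_sdiff, Finset.mem_singleton]
  constructor
  · rintro ⟨hvx, hvy⟩
    obtain ⟨i, rfl⟩ := mem_image.mp hvx
    by_contra hiu
    exact hvy (mem_image.mpr ⟨i, (he i fun h => hiu (h ▸ rfl)).symm⟩)
  · rintro rfl
    exact ⟨mem_image.mpr ⟨u, rfl⟩, apply_notMem_image hne he⟩

theorem symmDiff_image (hne : x.1 u ≠ y.1 u) (he : ∀ l, l ≠ u → x.1 l = y.1 l) :
    symmDiff x.image y.image = {x.1 u, y.1 u} := by
  rw [Finset.symmDiff_def, image_sdiff_image hne he,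
    image_sdiff_image hne.symm fun l hl => (he l hl).symm, Finset.insert_eq]

theorem eq_of_image_eq (himg : x.image = y.image) (he : ∀ l, l ≠ u → x.1 l = y.1 l) :
    x = y := by
  by_contra hxy
  have hne : x.1 u ≠ y.1 u := fun hu =>
    hxy (Subtype.ext (funext fun l => (eq_or_ne l u).elim (· ▸ hu) (he l)))
  exact apply_notMem_image hne he (himg ▸ mem_image.mpr ⟨u, rfl⟩)

end EqOff

def toFinset (x : InjTuple V k) : {s : Finset V // s.card = k} := ⟨x.image, x.card_image⟩

theorem toFinset_surjective : Function.Surjective (toFinset : InjTuple V k → _) := by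
  rintro ⟨s, hs⟩
  let e := (Finset.equivFinOfCardEq hs).symm
  refine ⟨⟨fun i => e i, Subtype.val_injective.comp e.injective⟩, Subtype.ext ?_⟩
  ext v
  simp only [toFinset, mem_image]
  exact ⟨by rintro ⟨i, rfl⟩; exact (e i).2, fun hv => ⟨e.symm ⟨v, hv⟩, by simp⟩⟩

noncomputable def orbitEquiv :
    Quotient (MulAction.orbitRel (Equiv.Perm (Fin k)) (InjTuple V k)) ≃
      {s : Finset V // s.card = k} :=
  Equiv.ofBijective (Quotient.lift toFinset fun _ _ h =>
      Subtype.ext (mk_eq_mk_iff_image_eq.mp (Quotient.sound h)))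
    ⟨fun U W => Quotient.inductionOn₂ U W fun _ _ h =>
        mk_eq_mk_iff_image_eq.mpr (congrArg Subtype.val h),
      fun s => (toFinset_surjective s).imp' (Quotient.mk _) fun _ hx => hx⟩

@[simp]
theorem orbitEquiv_mk (x : InjTuple V k) :
    orbitEquiv (Quotient.mk (MulAction.orbitRel (Equiv.Perm (Fin k)) (InjTuple V k)) x) =
      x.toFinset :=
  rfl

variable {G : SimpleGraph V}

theorem symPow_adj_toFinset_of_restPow_adj {x y : InjTuple V k} (h : (restPow G k).Adj x y) :
    (symPow G k).Adj x.toFinset y.toFinset := by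
  obtain ⟨u, hadj, he⟩ := h
  exact ⟨x.1 u, y.1 u, hadj, symmDiff_image hadj.ne he⟩

theorem exists_restPow_adj_of_symmDiff_eq_pair (x : InjTuple V k) {s : Finset V}
    (hs : s.card = k) {a b : V} (hab : G.Adj a b) (h : symmDiff x.image s = {a, b})
    (ha : a ∈ x.image) : ∃ y : InjTuple V k, y.image = s ∧ (restPow G k).Adj x y := by
  obtain ⟨hb, rfl⟩ :=
    Finset.notMem_and_eq_insert_erase_of_symmDiff_eq_pair (hs.trans x.card_image.symm) h ha
  obtain ⟨u, rfl⟩ := mem_image.mp ha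
  have hxb : ∀ i, x.1 i ≠ b := fun i hi => hb (mem_image.mpr ⟨i, hi⟩)
  have hinj : Function.Injective (Function.update x.1 u b) := by
    intro i j hij
    simp only [Function.update_apply] at hij
    split_ifs at hij with hi hj hj
    · exact hi.trans hj.symm
    · exact absurd hij.symm (hxb j)
    · exact absurd hij (hxb i)
    · exact x.2 hij
  let y : InjTuple V k := ⟨Function.update x.1 u b, hinj⟩
  have hsub : y.image ⊆ insert b (x.image.erase (x.1 u)) := by
    intro v hv
    obtain ⟨i, rfl⟩ := mem_image.mp hv
    rcases eq_or_ne i u with rfl | hiu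
    · simp [y]
    · simp [y, hiu, x.2.ne hiu, mem_image.mpr ⟨i, rfl⟩]
  refine ⟨y, Finset.eq_of_subset_of_card_le hsub (by rw [hs, card_image]), u, ?_, ?_⟩
  · simpa [y] using hab
  · exact fun l hl => (Function.update_of_ne hl _ _).symm

theorem symPow_adj_toFinset_iff {x y : InjTuple V k} :
    (symPow G k).Adj x.toFinset y.toFinset ↔
      ∃ x' y' : InjTuple V k,
        x'.image = x.image ∧ y'.image = y.image ∧ (restPow G k).Adj x' y' := by
  constructor
  · rintro ⟨a, b, hab, h⟩
    have ha : a ∈ symmDiff x.image y.image := by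
      rw [show symmDiff x.image y.image = {a, b} from h]
      exact Finset.mem_insert_self a {b}
    rcases Finset.mem_symmDiff.mp ha with ⟨hax, -⟩ | ⟨hay, -⟩
    · obtain ⟨y', hy', hadj⟩ := exists_restPow_adj_of_symmDiff_eq_pair x y.card_image hab h hax
      exact ⟨x, y', rfl, hy', hadj⟩
    · obtain ⟨x', hx', hadj⟩ := exists_restPow_adj_of_symmDiff_eq_pair y x.card_image hab
        (by rw [symmDiff_comm]; exact h) hay
      exact ⟨x', y, hx', rfl, hadj.symm⟩
  · rintro ⟨x', y', hx, hy, hadj⟩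
    have := symPow_adj_toFinset_of_restPow_adj hadj
    rwa [show x'.toFinset = x.toFinset from Subtype.ext hx,
      show y'.toFinset = y.toFinset from Subtype.ext hy] at this

end InjTuple

open InjTuple

theorem restPow_simplyLaced {V : Type*} (G : SimpleGraph V) (k : ℕ) :
    SimplyLaced (restPow G k) (Equiv.Perm (Fin k)) := by
  refine ⟨fun x y ⟨u, hadj, he⟩ h => ?_, fun x y z ⟨u, hy, hey⟩ ⟨w, _, hez⟩ h => ?_⟩
  · rw [mk_eq_mk_iff_image_eq] at h
    exact apply_notMem_image hadj.ne he (h ▸ mem_image.mpr ⟨u, rfl⟩)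
  · rw [mk_eq_mk_iff_image_eq] at h
    obtain rfl : u = w := by
      by_contra huw
      exact apply_notMem_image hy.ne hey (h ▸ mem_image.mpr ⟨u, (hez u huw).symm⟩)
    exact eq_of_image_eq h fun l hl => (hey l hl).symm.trans (hez l hl)

theorem quotGraph_adj_iff {V Γ : Type*} [Group Γ] [MulAction Γ V] {X : SimpleGraph V}
    (hX : ∀ u v : V, X.Adj u v →
      Quotient.mk (MulAction.orbitRel Γ V) u ≠ Quotient.mk (MulAction.orbitRel Γ V) v)
    {U W : Quotient (MulAction.orbitRel Γ V)} :
    (quotGraph X Γ).Adj U W ↔ ∃ u w : V, Quotient.mk (MulAction.orbitRel Γ V) u = U ∧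
      Quotient.mk (MulAction.orbitRel Γ V) w = W ∧ X.Adj u w := by
  refine ⟨And.right, fun h => ⟨?_, h⟩⟩
  obtain ⟨u, w, rfl, rfl, huw⟩ := h
  exact hX u w huw

noncomputable def restPowQuotientIsoSymPow {V : Type*} [DecidableEq V] (G : SimpleGraph V)
    (k : ℕ) : quotGraph (restPow G k) (Equiv.Perm (Fin k)) ≃g symPow G k where
  toEquiv := orbitEquiv
  map_rel_iff' {U W} := by
    induction U using Quotient.ind
    induction W using Quotient.ind
    simp only [orbitEquiv_mk]
    rw [quotGraph_adj_iff (restPow_simplyLaced G k).1, symPow_adj_toFinset_iff]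
    simp only [mk_eq_mk_iff_image_eq]

theorem restPow_quotient_simplyLaced_and_iso_symPow_general
    {V : Type*} [DecidableEq V] (G : SimpleGraph V) (k : ℕ) :
    SimplyLaced (restPow G k) (Equiv.Perm (Fin k)) ∧
      Nonempty ((quotGraph (restPow G k) (Equiv.Perm (Fin k))) ≃g (symPow G k)) :=
  ⟨restPow_simplyLaced G k, ⟨restPowQuotientIsoSymPow G k⟩⟩

/-- For a graph with at least `k` vertices, the quotient of the restricted
k-th power by the natural `S_k`-action is simply laced, and this quotient graph is
isomorphic to the k-th symmetric power. -/
theorem restPow_quotient_simplyLaced_and_iso_symPow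
    {V : Type*} [Fintype V] [DecidableEq V] (G : SimpleGraph V) (k : ℕ)
    (hk : k ≤ Fintype.card V) :
    SimplyLaced (restPow G k) (Equiv.Perm (Fin k)) ∧
      Nonempty ((quotGraph (restPow G k) (Equiv.Perm (Fin k))) ≃g (symPow G k)) :=
  restPow_quotient_simplyLaced_and_iso_symPow_general G k
end

section
/- Let G and H be graphs on n vertices. If the stable 2-dimensional Weisfeiler-Lehman colorings of G and H yield equal multisets of colors (in every round), then G and H are cospectral. -/
attribute [local instance] Classical.propDecidable

/-- The type of "types" (isomorphism types) of k-tuples: the pattern of equalities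
and of adjacencies among the entries. -/
def Tp (k : ℕ) : Type := (Fin k → Fin k → Prop) × (Fin k → Fin k → Prop)

/-- The type `tp` of a k-tuple of vertices: which entries are equal and which are
adjacent. Two tuples are equivalent iff they have the same `tp`. -/
def tp {V : Type*} (G : SimpleGraph V) {k : ℕ} (x : Fin k → V) : Tp k :=
  (fun a b => x a = x b, fun a b => G.Adj (x a) (x b))

/-- The type of colors used at round `r+1` of the k-dimensional Weisfeiler-Lehman
refinement (round indexing starts at `0` here, corresponding to round `1` of the
usual presentation). -/
def WLColor (k : ℕ) : ℕ → Type
  | 0 => Tp k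
  | r + 1 => Multiset (Tp (k + 1) × (Fin k → WLColor k r))

/-- The k-dimensional Weisfeiler-Lehman coloring of k-tuples: round `0` is the type
`tp`, and round `r+1` attaches to a tuple the multiset, over all vertices `m`, of the
type of the extended `(k+1)`-tuple together with the round-`r` colors of the tuples
obtained by substituting `m` into each of the `k` positions. -/
def WL {V : Type*} [Fintype V] (G : SimpleGraph V) (k : ℕ) :
    (r : ℕ) → (Fin k → V) → WLColor k r
  | 0, x => tp G x
  | r + 1, x =>
      Finset.univ.val.map fun m : V =>
        (tp G (Fin.snoc x m), fun t => WL G k r (Function.update x t m))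

/-!
The round-`s` color of a pair `(u, v)` determines whether `u = v` and the number of walks of
length `s` from `u` to `v`: the round-`(s+1)` color lists, for every vertex `m`, whether `u ~ m`
together with the round-`s` color of `(m, v)`. So the multiset of round-`s` colors determines
`tr (A ^ s)`. For a Hermitian matrix these traces are the power sums of the eigenvalues, which
by Newton's identities determine their elementary symmetric functions, hence the characteristic
polynomial.
-/

open Finset Polynomial

theorem Multiset.mul_esymm_eq_sum {R : Type*} [CommRing R] (s : Multiset R) (k : ℕ) :
    k * s.esymm k = (-1) ^ (k + 1) * ∑ a ∈ HasAntidiagonal.antidiagonal k with a.1 < k,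
      (-1) ^ a.1 * s.esymm a.1 * (s.map (· ^ a.2)).sum := by
  classical
  have hpsum (n : ℕ) : MvPolynomial.aeval (fun x : s => (x : R)) (MvPolynomial.psum s R n) =
      (s.map (· ^ n)).sum := by
    simp only [MvPolynomial.psum, map_sum, map_pow, MvPolynomial.aeval_X]
    exact congrArg Multiset.sum (s.map_univ_comp_coe (· ^ n))
  have h := congrArg (MvPolynomial.aeval (fun x : s => (x : R)))
    (MvPolynomial.mul_esymm_eq_sum s R k)
  simpa only [map_mul, map_sum, map_pow, map_neg, map_one, map_natCast,
    MvPolynomial.aeval_esymm_eq_multiset_esymm, Multiset.map_univ_coe, hpsum] using h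

theorem Multiset.esymm_eq_of_sum_pow_eq {K : Type*} [Field K] [CharZero K] {s t : Multiset K}
    (h : ∀ k, (s.map (· ^ k)).sum = (t.map (· ^ k)).sum) (k : ℕ) : s.esymm k = t.esymm k := by
  induction k using Nat.strong_induction_on with
  | _ k ih =>
    rcases Nat.eq_zero_or_pos k with rfl | hk
    · simp [Multiset.esymm]
    have hmul : (k : K) * s.esymm k = k * t.esymm k := by
      rw [s.mul_esymm_eq_sum, t.mul_esymm_eq_sum,
        Finset.sum_congr rfl fun a ha => by rw [ih a.1 (Finset.mem_filter.mp ha).2, h]]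
    exact mul_left_cancel₀ (Nat.cast_ne_zero.mpr hk.ne') hmul

theorem Multiset.eq_of_sum_pow_eq {K : Type*} [Field K] [CharZero K] {s t : Multiset K}
    (h : ∀ k, (s.map (· ^ k)).sum = (t.map (· ^ k)).sum) : s = t := by
  have hcard : card s = card t := by
    simpa only [pow_zero, Multiset.map_const', Multiset.sum_replicate, nsmul_eq_mul, mul_one,
      Nat.cast_inj] using h 0
  rw [← roots_multiset_prod_X_sub_C s, ← roots_multiset_prod_X_sub_C t,
    prod_X_sub_X_eq_sum_esymm, prod_X_sub_X_eq_sum_esymm, hcard]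
  simp only [Multiset.esymm_eq_of_sum_pow_eq h]

namespace Matrix.IsHermitian

variable {𝕜 m n : Type*} [RCLike 𝕜] [Fintype m] [DecidableEq m] [Fintype n] [DecidableEq n]
  {A : Matrix m m 𝕜} {B : Matrix n n 𝕜}

theorem trace_pow (hA : A.IsHermitian) (k : ℕ) :
    (A ^ k).trace = ∑ i, (hA.eigenvalues i : 𝕜) ^ k := by
  conv_lhs => rw [hA.spectral_theorem]
  rw [← map_pow, Unitary.conjStarAlgAut_apply, trace_mul_cycle, Unitary.coe_star_mul_self,
    one_mul, diagonal_pow, trace_diagonal]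
  rfl

theorem charpoly_eq_of_trace_pow_eq (hA : A.IsHermitian) (hB : B.IsHermitian)
    (h : ∀ k, (A ^ k).trace = (B ^ k).trace) : A.charpoly = B.charpoly := by
  have heig : univ.val.map (fun i => (hA.eigenvalues i : 𝕜)) =
      univ.val.map (fun i => (hB.eigenvalues i : 𝕜)) :=
    Multiset.eq_of_sum_pow_eq fun k => by
      rw [Multiset.map_map, Multiset.map_map]
      exact (hA.trace_pow k).symm.trans ((h k).trans (hB.trace_pow k))
  have hprod := congrArg (fun s => (s.map (X - C ·)).prod) heig
  simp only [Multiset.map_map, Function.comp_def] at hprod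
  rw [hA.charpoly_eq, hB.charpoly_eq]
  exact hprod

end Matrix.IsHermitian

theorem Matrix.trace_eq_sum_fin_two_ite {n R : Type*} [Fintype n] [DecidableEq n]
    [AddCommMonoid R] (M : Matrix n n R) :
    M.trace = ∑ x : Fin 2 → n, if x 0 = x 1 then M (x 0) (x 1) else 0 := by
  rw [← (finTwoArrowEquiv n).symm.sum_comp, Fintype.sum_prod_type]
  simp [Matrix.trace]

namespace WLColor

noncomputable def walkCount (R : Type*) [Semiring R] : (s : ℕ) → WLColor 2 s → R
  | 0, c => if (c : Tp 2).1 0 1 then 1 else 0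
  | s + 1, c => ((c : Multiset (Tp 3 × (Fin 2 → WLColor 2 s))).map
      fun p => if p.1.2 0 2 then walkCount R s (p.2 0) else 0).sum

def IsDiag : (s : ℕ) → WLColor 2 s → Prop
  | 0, c => (c : Tp 2).1 0 1
  | s + 1, c => ∃ p ∈ (show Multiset (Tp 3 × (Fin 2 → WLColor 2 s)) from c), p.1.1 0 1

noncomputable def closedWalkCount (R : Type*) [Semiring R] (s : ℕ) (c : WLColor 2 s) : R :=
  if IsDiag s c then walkCount R s c else 0

variable {V : Type*} [Fintype V] (G : SimpleGraph V) (R : Type*) [Semiring R]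

theorem walkCount_WL [DecidableEq V] [DecidableRel G.Adj] (s : ℕ) (x : Fin 2 → V) :
    walkCount R s (WL G 2 s x) = (G.adjMatrix R ^ s) (x 0) (x 1) := by
  induction s generalizing x with
  | zero =>
    simp only [WL, tp, walkCount, pow_zero, Matrix.one_apply]
    congr
  | succ s ih =>
    simp only [walkCount, WL, Multiset.map_map]
    rw [pow_succ', Matrix.mul_apply]
    refine Finset.sum_congr rfl fun m _ => ?_
    simp only [Function.comp_apply, tp, ih, SimpleGraph.adjMatrix_apply, ite_mul, one_mul,
      zero_mul]
    have hsnoc : G.Adj ((Fin.snoc x m : Fin 3 → V) 0) ((Fin.snoc x m : Fin 3 → V) 2) ↔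
        G.Adj (x 0) m := Iff.rfl
    rw [if_congr hsnoc rfl rfl, Function.update_self, Function.update_of_ne (by decide)]

theorem isDiag_WL (s : ℕ) (x : Fin 2 → V) : IsDiag s (WL G 2 s x) ↔ x 0 = x 1 := by
  cases s with
  | zero => exact Iff.rfl
  | succ s =>
    simp only [IsDiag, WL, Multiset.mem_map]
    constructor
    · rintro ⟨_, ⟨m, -, rfl⟩, h⟩
      exact h
    · exact fun h => ⟨_, ⟨x 0, Finset.mem_univ_val _, rfl⟩, h⟩

theorem sum_closedWalkCount_WL [DecidableEq V] [DecidableRel G.Adj] (s : ℕ) :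
    ((univ.val.map fun x : Fin 2 → V => WL G 2 s x).map (closedWalkCount R s)).sum =
      (G.adjMatrix R ^ s).trace := by
  rw [Matrix.trace_eq_sum_fin_two_ite, Multiset.map_map]
  refine Finset.sum_congr rfl fun x _ => ?_
  simp only [Function.comp_apply, closedWalkCount, isDiag_WL, walkCount_WL]

end WLColor

theorem cospectral_of_WL2_multisets_eq_general
    {V V' : Type*} [Fintype V] [Fintype V'] [DecidableEq V] [DecidableEq V']
    (G : SimpleGraph V) (H : SimpleGraph V')
    [DecidableRel G.Adj] [DecidableRel H.Adj]
    (h : ∀ r : ℕ,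
      (Finset.univ.val.map fun x : Fin 2 → V => WL G 2 r x) =
      (Finset.univ.val.map fun x : Fin 2 → V' => WL H 2 r x)) :
    (G.adjMatrix ℝ).charpoly = (H.adjMatrix ℝ).charpoly :=
  (G.isHermitian_adjMatrix ℝ).charpoly_eq_of_trace_pow_eq (H.isHermitian_adjMatrix ℝ) fun k => by
    rw [← WLColor.sum_closedWalkCount_WL, ← WLColor.sum_closedWalkCount_WL, h k]

/-- If in every round the multisets of 2-dimensional Weisfeiler-Lehman
colors of all pairs of vertices of `G` and of `H` coincide, then `G` and `H` are
cospectral. -/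
theorem cospectral_of_WL2_multisets_eq
    {V V' : Type*} [Fintype V] [Fintype V'] [DecidableEq V] [DecidableEq V']
    (G : SimpleGraph V) (H : SimpleGraph V')
    [DecidableRel G.Adj] [DecidableRel H.Adj]
    (hcard : Fintype.card V = Fintype.card V')
    (h : ∀ r : ℕ,
      (Finset.univ.val.map fun x : Fin 2 → V => WL G 2 r x) =
      (Finset.univ.val.map fun x : Fin 2 → V' => WL H 2 r x)) :
    (G.adjMatrix ℝ).charpoly = (H.adjMatrix ℝ).charpoly :=
  cospectral_of_WL2_multisets_eq_general G H h
end

section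
/- Let G and H be graphs and let W^r_{G,2k} denote the r-th round 2k-dimensional Weisfeiler-Lehman coloring. If W^r_{G,2k}(i₁...i_k j₁...j_k) = W^r_{H,2k}(p₁...p_k q₁...q_k), then A_{G^k}^r(i₁...i_k, j₁...j_k) = A_{H^k}^r(p₁...p_k, q₁...q_k), where G^k and H^k are the k-th powers. -/
attribute [local instance] Classical.propDecidable

/-- The k-th power of a graph: vertices are k-tuples, two tuples adjacent iff they
agree in all but one coordinate, at which the entries are adjacent in `G`. -/
def graphPow {V : Type*} (G : SimpleGraph V) (k : ℕ) : SimpleGraph (Fin k → V) where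
  Adj x y := ∃ u, G.Adj (x u) (y u) ∧ ∀ l, l ≠ u → x l = y l
  symm := by
    constructor
    rintro x y ⟨u, h, he⟩
    exact ⟨u, h.symm, fun l hl => (he l hl).symm⟩
  loopless := by
    constructor
    rintro x ⟨u, h, -⟩
    exact G.ne_of_adj h rfl

/-! The entry `A_{G^k}^{r+1}(i, j)` is one and the same function, for every graph, of the
round-`r` color of the tuple `i j`. A neighbour of `i` in `G^k` is `i` with one coordinate `u`
replaced by a `G`-neighbour `m` of `i u`, so
`A^{r+2}(i, j) = ∑_m ∑_u [i u ~ m] · A^{r+1}(i[u ↦ m], j)`. For each `m`, the round-`(r+1)` color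
of `i j` records the type of `i j m`, which contains the adjacencies `i u ~ m`, and the round-`r`
colors of the tuples `(i j)[u ↦ m] = i[u ↦ m] j`, which by induction determine
`A^{r+1}(i[u ↦ m], j)`. -/

open Finset Fin

lemma Fin.update_append_castAdd {α : Type*} {m n : ℕ} (x : Fin m → α) (y : Fin n → α)
    (u : Fin m) (a : α) :
    Function.update (Fin.append x y) (castAdd n u) a = Fin.append (Function.update x u a) y := by
  funext t
  refine Fin.addCases (fun l => ?_) (fun l => ?_) t
  · rcases eq_or_ne l u with rfl | hne
    · simp
    · rw [Function.update_of_ne ((castAdd_injective m n).ne hne), append_left, append_left,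
        Function.update_of_ne hne]
  · rw [Function.update_of_ne (by simp [Fin.ext_iff]; omega), append_right, append_right]

section graphPow

variable {V : Type*} (G : SimpleGraph V) {k : ℕ}

lemma graphPow_adj_iff_exists_update {i m : Fin k → V} :
    (graphPow G k).Adj i m ↔ ∃ u a, G.Adj (i u) a ∧ Function.update i u a = m := by
  simp only [Function.update_eq_iff]
  exact ⟨fun ⟨u, h, he⟩ => ⟨u, _, h, rfl, he⟩, fun ⟨u, _, h, rfl, he⟩ => ⟨u, h, he⟩⟩

lemma injOn_update_of_adj (i : Fin k → V) :
    Set.InjOn (fun x : Fin k × V => Function.update i x.1 x.2) {x | G.Adj (i x.1) x.2} := by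
  rintro ⟨u, a⟩ hua ⟨u', a'⟩ hua' heq
  have hu := congrFun heq u
  rcases eq_or_ne u u' with rfl | hne
  · simpa using hu
  · simp only [Function.update_self, Function.update_of_ne hne] at hu
    exact absurd (hu ▸ hua) (G.loopless.irrefl _)

lemma sum_graphPow_adjMatrix_mul [Fintype V] {R : Type*} [NonAssocSemiring R]
    (i : Fin k → V) (f : (Fin k → V) → R) :
    ∑ m, (graphPow G k).adjMatrix R i m * f m =
      ∑ u, ∑ a, G.adjMatrix R (i u) a * f (Function.update i u a) := by
  have hnbrs : univ.filter ((graphPow G k).Adj i) =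
      (univ.filter fun x : Fin k × V => G.Adj (i x.1) x.2).image
        fun x => Function.update i x.1 x.2 := by
    ext m
    simp [graphPow_adj_iff_exists_update]
  rw [← Fintype.sum_prod_type']
  simp only [SimpleGraph.adjMatrix_apply, ite_mul, one_mul, zero_mul, ← sum_filter]
  rw [hnbrs, sum_image (by simpa using injOn_update_of_adj G i)]

end graphPow

noncomputable def adjPowEntryOfColor (R : Type*) [Semiring R] (k : ℕ) :
    (r : ℕ) → WLColor (k + k) r → R
  | 0, c => if ∃ u, c.2 (castAdd k u) (natAdd k u) ∧ ∀ l ≠ u, c.1 (castAdd k l) (natAdd k l)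
      then 1 else 0
  | r + 1, c => (c.map fun s => ∑ u : Fin k,
      (if s.1.2 (castAdd k u).castSucc (last (k + k)) then 1 else 0) *
        adjPowEntryOfColor R k r (s.2 (castAdd k u))).sum

theorem adjPowEntryOfColor_WL_append {V : Type*} [Fintype V] [DecidableEq V] (G : SimpleGraph V)
    (R : Type*) [Semiring R] {k : ℕ} (r : ℕ) (i j : Fin k → V) :
    adjPowEntryOfColor R k r (WL G (k + k) r (Fin.append i j)) =
      ((graphPow G k).adjMatrix R ^ (r + 1)) i j := by
  induction r generalizing i with
  | zero =>
    rw [zero_add, pow_one, SimpleGraph.adjMatrix_apply]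
    simp only [adjPowEntryOfColor, WL, tp, append_left, append_right]
    exact if_congr Iff.rfl rfl rfl
  | succ r ih =>
    rw [pow_succ', Matrix.mul_apply, sum_graphPow_adjMatrix_mul, sum_comm, adjPowEntryOfColor,
      WL, Multiset.map_map, Finset.sum_map_val]
    refine sum_congr rfl fun a _ => sum_congr rfl fun u _ => ?_
    simp only [tp, snoc_castSucc, snoc_last, append_left,
      update_append_castAdd, ih, SimpleGraph.adjMatrix_apply]

/-- If the round-`r` 2k-dimensional Weisfeiler-Lehman colors of the
2k-tuples `i₁…i_k j₁…j_k` (in `G`) and `p₁…p_k q₁…q_k` (in `H`) agree, then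
`A_{G^k}^r(i₁…i_k, j₁…j_k) = A_{H^k}^r(p₁…p_k, q₁…q_k)` (round index `r` here pairs
with the matrix power `r+1`, rounds being numbered from 1 in the paper). -/
theorem graphPow_adjMatrix_pow_entry_eq_of_WL2k_eq
    {V V' : Type*} [Fintype V] [Fintype V'] [DecidableEq V] [DecidableEq V']
    (G : SimpleGraph V) (H : SimpleGraph V') (k r : ℕ)
    (i j : Fin k → V) (p q : Fin k → V')
    (h : WL G (k + k) r (Fin.append i j) = WL H (k + k) r (Fin.append p q)) :
    (((graphPow G k).adjMatrix ℝ) ^ (r + 1)) i j =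
      (((graphPow H k).adjMatrix ℝ) ^ (r + 1)) p q := by
  rw [← adjPowEntryOfColor_WL_append, ← adjPowEntryOfColor_WL_append, h]
end

section
/- If G and H are graphs whose k-th symmetric powers are cospectral for some k, then in particular Tr(A_{G^(k)}^r · M_k) = Tr(A_{H^(k)}^r · M_k) for all r ≥ 0, where M_k((i₁...i_k),(j₁...j_k)) = k! if the two tuples of pairwise-distinct vertices are equal as sets and 0 otherwise; conversely this family of trace equalities for all r implies cospectrality of the symmetric powers. -/
attribute [local instance] Classical.propDecidable

/-!
Let `P` be the 0/1 matrix from injective `k`-tuples to `k`-subsets recording which subset a tuple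
enumerates. An edge of the symmetric power leaving the image of a tuple `x` lifts to exactly one
edge of the restricted power leaving `x`: replace the coordinate of `x` carrying the vertex that
leaves. Hence `A_{G^(k)} P = P A_{G^{k}}`. Every fibre of `P` has `k!` elements, so `Pᵀ P = k! I`,
while `M_k = k! P Pᵀ`; therefore `Tr(A_{G^(k)}^r M_k) = k!² Tr(A_{G^{k}}^r)`. Finally, for real
symmetric matrices, equal traces of all powers means equal power sums of the eigenvalues, which by
Newton's identities is the same as equal characteristic polynomials.
-/

open Finset Function
open scoped Nat Matrix

section PowerSums

open Polynomial

variable {K σ τ : Type*} [CommRing K] [IsDomain K] [CharZero K] [Fintype σ] [Fintype τ]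

theorem MvPolynomial.aeval_esymm_eq_of_sum_pow_eq {f : σ → K} {g : τ → K}
    (h : ∀ r, 0 < r → ∑ i, f i ^ r = ∑ j, g j ^ r) (m : ℕ) :
    aeval f (esymm σ K m) = aeval g (esymm τ K m) := by
  induction m using Nat.strong_induction_on with
  | _ m ih =>
  rcases Nat.eq_zero_or_pos m with rfl | hm
  · simp
  have hf := congrArg (aeval f) (mul_esymm_eq_sum σ K m)
  have hg := congrArg (aeval g) (mul_esymm_eq_sum τ K m)
  simp only [map_mul, map_sum, map_pow, map_natCast, map_neg, map_one, psum, aeval_X] at hf hg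
  refine mul_left_cancel₀ (Nat.cast_ne_zero.mpr hm.ne') (hf.trans (Eq.trans ?_ hg.symm))
  congr 1
  refine sum_congr rfl fun a ha => ?_
  rw [mem_filter, HasAntidiagonal.mem_antidiagonal] at ha
  rw [ih a.1 ha.2, h a.2 (by omega)]

theorem prod_X_sub_C_eq_iff_sum_pow_eq (f : σ → K) (g : τ → K) :
    ∏ i, (X - C (f i)) = ∏ j, (X - C (g j)) ↔ ∀ r, ∑ i, f i ^ r = ∑ j, g j ^ r := by
  have hf : ∏ i, (X - C (f i)) = ((univ.val.map f).map fun t => X - C t).prod := by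
    simp [Finset.prod_map_val]
  have hg : ∏ j, (X - C (g j)) = ((univ.val.map g).map fun t => X - C t).prod := by
    simp [Finset.prod_map_val]
  rw [hf, hg]
  constructor
  · intro h r
    have hroots := congrArg roots h
    rw [roots_multiset_prod_X_sub_C, roots_multiset_prod_X_sub_C] at hroots
    simpa [Finset.sum_map_val] using congrArg (fun s => (s.map (· ^ r)).sum) hroots
  · intro h
    have hcard : Fintype.card σ = Fintype.card τ := by
      simpa using h 0
    have hesymm := MvPolynomial.aeval_esymm_eq_of_sum_pow_eq (fun r _ => h r)
    simp only [Multiset.prod_X_sub_X_eq_sum_esymm, Multiset.card_map, card_val, card_univ,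
      hcard, ← MvPolynomial.aeval_esymm_eq_multiset_esymm σ K, hesymm,
      MvPolynomial.aeval_esymm_eq_multiset_esymm]

end PowerSums

namespace Matrix

variable {m n R : Type*} [Fintype m] [DecidableEq m] [Fintype n] [DecidableEq n]

theorem IsHermitian.trace_pow_eq_sum_eigenvalues_pow {𝕜 : Type*} [RCLike 𝕜]
    {A : Matrix n n 𝕜} (hA : A.IsHermitian) (r : ℕ) :
    (A ^ r).trace = ∑ i, (hA.eigenvalues i : 𝕜) ^ r := by
  conv_lhs => rw [hA.spectral_theorem, ← map_pow, Unitary.conjStarAlgAut_apply,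
    trace_mul_cycle, Unitary.star_mul_self_of_mem hA.eigenvectorUnitary.2, one_mul,
    diagonal_pow, trace_diagonal]
  rfl

theorem IsHermitian.charpoly_eq_iff_trace_pow_eq {𝕜 : Type*} [RCLike 𝕜] {A : Matrix n n 𝕜}
    {B : Matrix m m 𝕜} (hA : A.IsHermitian) (hB : B.IsHermitian) :
    A.charpoly = B.charpoly ↔ ∀ r, (A ^ r).trace = (B ^ r).trace := by
  simp only [hA.charpoly_eq, hB.charpoly_eq, prod_X_sub_C_eq_iff_sum_pow_eq,
    hA.trace_pow_eq_sum_eigenvalues_pow, hB.trace_pow_eq_sum_eigenvalues_pow]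

theorem pow_mul_eq_mul_pow_of_mul_eq [Semiring R] {A : Matrix m m R} {B : Matrix n n R}
    {P : Matrix m n R} (h : A * P = P * B) (r : ℕ) : A ^ r * P = P * B ^ r := by
  induction r with
  | zero => rw [pow_zero, pow_zero, Matrix.one_mul, Matrix.mul_one]
  | succ r ih =>
    rw [pow_succ, Matrix.mul_assoc, h, ← Matrix.mul_assoc, ih, Matrix.mul_assoc, ← pow_succ]

theorem trace_pow_mul_mul_eq_of_mul_eq [CommSemiring R] {A : Matrix m m R} {B : Matrix n n R}
    {P : Matrix m n R} {Q : Matrix n m R} {c : R} (h : A * P = P * B) (hQP : Q * P = c • 1)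
    (r : ℕ) : (A ^ r * (P * Q)).trace = c * (B ^ r).trace := by
  rw [← Matrix.mul_assoc, pow_mul_eq_mul_pow_of_mul_eq h, Matrix.mul_assoc, trace_mul_comm,
    Matrix.mul_assoc, hQP, Matrix.mul_smul, Matrix.mul_one, trace_smul, smul_eq_mul]

end Matrix

theorem image_sdiff_image_eq_singleton {α β : Type*} [Fintype α] [DecidableEq β]
    {x y : α → β} (hx : Injective x) {u : α} (hne : x u ≠ y u)
    (heq : ∀ l ≠ u, x l = y l) : univ.image x \ univ.image y = {x u} := by
  ext v
  simp only [mem_sdiff, mem_image, mem_univ, true_and, mem_singleton, not_exists]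
  constructor
  · rintro ⟨⟨l, rfl⟩, hv⟩
    by_contra hl
    exact hv l (heq l (fun h => hl (h ▸ rfl))).symm
  · rintro rfl
    refine ⟨⟨u, rfl⟩, fun l hl => ?_⟩
    by_cases hlu : l = u
    · exact hne (hlu ▸ hl.symm)
    · exact hlu (hx ((heq l hlu).trans hl))

theorem symmDiff_image_eq_pair {α β : Type*} [Fintype α] [DecidableEq β] {x y : α → β}
    (hx : Injective x) (hy : Injective y) {u : α} (hne : x u ≠ y u)
    (heq : ∀ l ≠ u, x l = y l) :
    symmDiff (univ.image x) (univ.image y) = {x u, y u} := by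
  rw [symmDiff_def, sup_eq_union, image_sdiff_image_eq_singleton hx hne heq,
    image_sdiff_image_eq_singleton hy hne.symm fun l hl => (heq l hl).symm, insert_eq]

theorem Finset.mem_iff_notMem_of_symmDiff_eq_pair {α : Type*} [DecidableEq α] {s t : Finset α}
    {a b : α} (hcard : s.card = t.card) (hab : a ≠ b) (h : symmDiff s t = {a, b}) :
    a ∈ s ↔ b ∉ s := by
  have ht : t.card = (symmDiff s {a, b}).card := by rw [← h, symmDiff_symmDiff_cancel_left]
  have hpair := card_pair hab
  by_cases ha : a ∈ s <;> by_cases hb : b ∈ s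
  · have hsub : {a, b} ⊆ s := insert_subset ha (singleton_subset_iff.mpr hb)
    rw [symmDiff_comm, symmDiff_of_le hsub, card_sdiff_of_subset hsub] at ht
    have := card_le_card hsub
    omega
  · simp [ha, hb]
  · simp [ha, hb]
  · have hdisj : Disjoint s {a, b} := by simp [ha, hb]
    rw [hdisj.symmDiff_eq_sup, sup_eq_union, card_union_of_disjoint hdisj] at ht
    omega

theorem Function.Injective.update_of_forall_ne {α β : Type*} [DecidableEq α] {x : α → β}
    (hx : Injective x) {b : β} (hb : ∀ l, x l ≠ b) (u : α) : Injective (update x u b) := by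
  intro i j hij
  rcases eq_or_ne i u with hi | hi <;> rcases eq_or_ne j u with hj | hj
  · exact hi.trans hj.symm
  · rw [hi, update_self, update_of_ne hj] at hij
    exact absurd hij.symm (hb j)
  · rw [hj, update_self, update_of_ne hi] at hij
    exact absurd hij (hb i)
  · simp only [update_of_ne hi, update_of_ne hj] at hij
    exact hx hij

def tupleImage {V : Type*} [DecidableEq V] {k : ℕ} (x : {x : Fin k → V // Injective x}) :
    {s : Finset V // s.card = k} :=
  ⟨univ.image x.1, by rw [card_image_of_injective _ x.2, card_univ, Fintype.card_fin]⟩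

def tupleImageMatrix (R : Type*) [Zero R] [One R] (V : Type*) [DecidableEq V] (k : ℕ) :
    Matrix {x : Fin k → V // Injective x} {s : Finset V // s.card = k} R :=
  Matrix.of fun x s => if tupleImage x = s then 1 else 0

section Powers

variable {V : Type*} [DecidableEq V] {k : ℕ} {G : SimpleGraph V} {R : Type*}

theorem tupleImage_eq_iff {x : {x : Fin k → V // Injective x}}
    {s : {s : Finset V // s.card = k}} :
    tupleImage x = s ↔ ∀ i, x.1 i ∈ s.1 := by
  refine ⟨fun h i => h ▸ mem_image_of_mem x.1 (mem_univ i), fun h => Subtype.ext ?_⟩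
  exact eq_of_subset_of_card_le (image_subset_iff.mpr fun i _ => h i)
    (by rw [s.2, (tupleImage x).2])

theorem symPow_adj_tupleImage_of_restPow_adj {x y : {x : Fin k → V // Injective x}}
    (h : (restPow G k).Adj x y) : (symPow G k).Adj (tupleImage x) (tupleImage y) := by
  obtain ⟨u, hadj, heq⟩ := h
  exact ⟨_, _, hadj, symmDiff_image_eq_pair x.2 y.2 hadj.ne heq⟩

theorem exists_restPow_adj_tupleImage_eq {x : {x : Fin k → V // Injective x}}
    {t : {s : Finset V // s.card = k}} (h : (symPow G k).Adj (tupleImage x) t) :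
    ∃ y, (restPow G k).Adj x y ∧ tupleImage y = t := by
  obtain ⟨a, b, hab, hsd⟩ := h
  change symmDiff (univ.image x.1) t.1 = {a, b} at hsd
  have hcard : (univ.image x.1).card = t.1.card := (tupleImage x).2.trans t.2.symm
  wlog ha : a ∈ univ.image x.1 generalizing a b
  · refine this b a hab.symm (by rw [hsd, pair_comm]) ?_
    simpa [ha] using (mem_iff_notMem_of_symmDiff_eq_pair hcard hab.ne hsd).not
  have hb := (mem_iff_notMem_of_symmDiff_eq_pair hcard hab.ne hsd).mp ha
  obtain ⟨u, -, rfl⟩ := mem_image.mp ha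
  have hinj := x.2.update_of_forall_ne (b := b)
    (fun l hl => hb (hl ▸ mem_image_of_mem x.1 (mem_univ l))) u
  have heq : ∀ l ≠ u, x.1 l = update x.1 u b l := fun l hl => (update_of_ne hl _ _).symm
  refine ⟨⟨update x.1 u b, hinj⟩, ⟨u, by simpa using hab, heq⟩, Subtype.ext ?_⟩
  rw [← symmDiff_right_inj (a := univ.image x.1), tupleImage,
    symmDiff_image_eq_pair x.2 hinj (by simpa using hab.ne) heq, hsd, update_self]

theorem eq_of_restPow_adj_of_tupleImage_eq {x y y' : {x : Fin k → V // Injective x}}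
    (hy : (restPow G k).Adj x y) (hy' : (restPow G k).Adj x y')
    (h : tupleImage y = tupleImage y') : y = y' := by
  obtain ⟨u, hadj, heq⟩ := hy
  obtain ⟨u', hadj', heq'⟩ := hy'
  have him : univ.image y.1 = univ.image y'.1 := congrArg Subtype.val h
  have hu : u = u' := by
    have := image_sdiff_image_eq_singleton x.2 hadj'.ne heq'
    rw [← him, image_sdiff_image_eq_singleton x.2 hadj.ne heq, singleton_inj] at this
    exact x.2 this
  subst hu
  have hyu : y.1 u = y'.1 u := by
    have := image_sdiff_image_eq_singleton y'.2 hadj'.ne.symm fun l hl => (heq' l hl).symm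
    rw [← him, image_sdiff_image_eq_singleton y.2 hadj.ne.symm fun l hl => (heq l hl).symm,
      singleton_inj] at this
    exact this
  ext l
  rcases eq_or_ne l u with rfl | hl
  · exact hyu
  · rw [← heq l hl, heq' l hl]

variable [Fintype V] (G)

theorem restPow_adjMatrix_mul_tupleImageMatrix [Semiring R] :
    (restPow G k).adjMatrix R * tupleImageMatrix R V k =
      tupleImageMatrix R V k * (symPow G k).adjMatrix R := by
  ext x t
  simp only [Matrix.mul_apply, tupleImageMatrix, Matrix.of_apply, boole_mul, mul_boole]
  rw [sum_ite_eq, if_pos (mem_univ _)]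
  simp only [SimpleGraph.adjMatrix_apply]
  by_cases hadj : (symPow G k).Adj (tupleImage x) t
  · obtain ⟨y₀, hy₀, rfl⟩ := exists_restPow_adj_tupleImage_eq hadj
    rw [if_pos hadj, sum_eq_single y₀ (fun y _ hne => ?_) (by simp), if_pos rfl, if_pos hy₀]
    split_ifs with himg hy
    · exact absurd (eq_of_restPow_adj_of_tupleImage_eq hy hy₀ himg) hne
    · rfl
    · rfl
  · rw [if_neg hadj]
    refine sum_eq_zero fun y _ => ?_
    split_ifs with himg hy
    · exact absurd (himg ▸ symPow_adj_tupleImage_of_restPow_adj hy) hadj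
    · rfl
    · rfl

theorem card_filter_tupleImage_eq (s : {s : Finset V // s.card = k}) :
    #{x : {x : Fin k → V // Injective x} | tupleImage x = s} = k ! := by
  rw [← Fintype.card_subtype]
  calc Fintype.card {x : {x : Fin k → V // Injective x} // tupleImage x = s}
      = Fintype.card (Fin k ↪ (s.1 : Set V)) :=
        Fintype.card_congr <| (Equiv.subtypeEquiv (Equiv.subtypeInjectiveEquivEmbedding _ _)
          fun _ => tupleImage_eq_iff).trans (Equiv.codRestrict _ _)
    _ = k ! := by simp [s.2, Nat.descFactorial_self]

theorem tupleImageMatrix_transpose_mul_self [Semiring R] :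
    (tupleImageMatrix R V k)ᵀ * tupleImageMatrix R V k = (k ! : R) • 1 := by
  ext s t
  simp only [Matrix.mul_apply, Matrix.transpose_apply, tupleImageMatrix, Matrix.of_apply,
    Matrix.smul_apply, Matrix.one_apply, smul_eq_mul, mul_boole, ← ite_and]
  split_ifs with hst
  · simp only [hst, and_self, sum_boole, card_filter_tupleImage_eq]
  · exact sum_eq_zero fun x _ => if_neg fun h => hst (h.2.symm.trans h.1)

theorem of_image_eq_eq_smul_tupleImageMatrix_mul_transpose [Semiring R] :
    (Matrix.of fun x y : {x : Fin k → V // Injective x} =>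
      if univ.image x.1 = univ.image y.1 then (k ! : R) else 0) =
      (k ! : R) • (tupleImageMatrix R V k * (tupleImageMatrix R V k)ᵀ) := by
  ext x y
  simp only [Matrix.mul_apply, Matrix.transpose_apply, tupleImageMatrix, Matrix.of_apply,
    Matrix.smul_apply, smul_eq_mul, mul_boole, sum_ite_eq, mem_univ, if_true]
  exact if_congr (by rw [Subtype.ext_iff]; rfl) rfl rfl

theorem trace_restPow_adjMatrix_pow_mul [CommSemiring R] (r : ℕ) :
    ((restPow G k).adjMatrix R ^ r * Matrix.of fun x y : {x : Fin k → V // Injective x} =>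
        if univ.image x.1 = univ.image y.1 then (k ! : R) else 0).trace =
      (k ! : R) ^ 2 * ((symPow G k).adjMatrix R ^ r).trace := by
  have hQP : ((k ! : R) • (tupleImageMatrix R V k)ᵀ) * tupleImageMatrix R V k =
      (k ! : R) ^ 2 • 1 := by
    rw [Matrix.smul_mul, tupleImageMatrix_transpose_mul_self, smul_smul, sq]
  rw [of_image_eq_eq_smul_tupleImageMatrix_mul_transpose, ← Matrix.mul_smul,
    Matrix.trace_pow_mul_mul_eq_of_mul_eq (restPow_adjMatrix_mul_tupleImageMatrix G) hQP]

end Powers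

/-- The k-th symmetric powers of `G` and `H` are cospectral if and only
if `Tr(A_{G^(k)}^r · M_k) = Tr(A_{H^(k)}^r · M_k)` for all `r ≥ 0`, where `M_k` has
entry `k!` at pairs of injective k-tuples that are equal as sets, and `0` otherwise. -/
theorem symPow_cospectral_iff_restPow_trace_Mk_eq
    {V V' : Type*} [Fintype V] [Fintype V'] [DecidableEq V] [DecidableEq V']
    (G : SimpleGraph V) (H : SimpleGraph V') (k : ℕ) :
    ((symPow G k).adjMatrix ℝ).charpoly = ((symPow H k).adjMatrix ℝ).charpoly ↔
      ∀ r : ℕ,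
        ((((restPow G k).adjMatrix ℝ) ^ r) *
          (Matrix.of fun x y : {x : Fin k → V // Function.Injective x} =>
            if Finset.univ.image x.1 = Finset.univ.image y.1
            then (Nat.factorial k : ℝ) else 0)).trace =
        ((((restPow H k).adjMatrix ℝ) ^ r) *
          (Matrix.of fun x y : {x : Fin k → V' // Function.Injective x} =>
            if Finset.univ.image x.1 = Finset.univ.image y.1
            then (Nat.factorial k : ℝ) else 0)).trace := by
  have hG := Matrix.isHermitian_iff_isSymm.mpr ((symPow G k).isSymm_adjMatrix (α := ℝ))
  have hH := Matrix.isHermitian_iff_isSymm.mpr ((symPow H k).isSymm_adjMatrix (α := ℝ))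
  have hk : (k ! : ℝ) ^ 2 ≠ 0 := pow_ne_zero 2 (Nat.cast_ne_zero.mpr k.factorial_ne_zero)
  simp only [hG.charpoly_eq_iff_trace_pow_eq hH, trace_restPow_adjMatrix_pow_mul,
    mul_right_inj' hk]
end
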